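/- arXiv:1910.00958 — 5 statements merged into one kernel-verified Lean document; each statement's English description precedes it below -/
import Mathlib

section
/- If p ≥ 3 is an even integer and λ ∈ ℝ \ {0}, then |f_λ(x)| ≥ p·|λ| for every real number x; in particular f_λ has no zeros on the real line. -/
open Complex Finset

open scoped Nat

/-!
Expanding each exponential in its power series and summing over `k` first, the sum of
`exp (ω ^ k * z)` over the `p`-th roots of unity `ω ^ k` keeps exactly the terms of degree
divisible by `p`: it equals `p * ∑' m, z ^ (p * m) / (p * m)!`. On the real line with `p` even,
every such term is nonnegative and the one with `m = 0` is `1`, so the sum is at least `p`.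
-/

theorem IsPrimitiveRoot.sum_pow_pow_eq_ite {R : Type*} [CommRing R] [IsDomain R] {ω : R} {p : ℕ}
    (hω : IsPrimitiveRoot ω p) (n : ℕ) :
    ∑ k ∈ range p, (ω ^ k) ^ n = if p ∣ n then (p : R) else 0 := by
  simp_rw [← pow_mul, mul_comm _ n, pow_mul]
  split_ifs with h
  · simp [(hω.pow_eq_one_iff_dvd n).2 h]
  · have hne : ω ^ n ≠ 1 := mt (hω.pow_eq_one_iff_dvd n).1 h
    refine eq_zero_of_ne_zero_of_mul_left_eq_zero (sub_ne_zero_of_ne hne) ?_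
    rw [mul_geom_sum, ← pow_mul, mul_comm, pow_mul, hω.pow_eq_one, one_pow, sub_self]

theorem tsum_ite_dvd_eq_tsum_mul {M : Type*} [AddCommMonoid M] [TopologicalSpace M] {p : ℕ}
    (hp : p ≠ 0) (a : ℕ → M) :
    ∑' n, (if p ∣ n then a n else 0) = ∑' m, a (p * m) := by
  rw [← (mul_right_injective₀ hp).tsum_eq]
  · simp
  · intro n hn
    obtain ⟨m, rfl⟩ : p ∣ n := by
      by_contra h
      simp [h] at hn
    exact ⟨m, rfl⟩

theorem IsPrimitiveRoot.sum_exp_mul_eq_tsum {ω : ℂ} {p : ℕ} (hω : IsPrimitiveRoot ω p)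
    (hp : p ≠ 0) (z : ℂ) :
    ∑ k ∈ range p, exp (ω ^ k * z) = p * ∑' m, z ^ (p * m) / (p * m)! := by
  have hexp (w : ℂ) : exp w = ∑' n, w ^ n / n ! := by
    rw [exp_eq_exp_ℂ, NormedSpace.exp_eq_tsum_div]
  calc ∑ k ∈ range p, exp (ω ^ k * z)
      = ∑' n, ∑ k ∈ range p, (ω ^ k * z) ^ n / n ! := by
        simp_rw [hexp]
        exact (Summable.tsum_finsetSum fun k _ =>
          NormedSpace.expSeries_div_summable (𝔸 := ℂ) _).symm
    _ = ∑' n, if p ∣ n then p * (z ^ n / n !) else 0 := by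
        refine tsum_congr fun n => ?_
        simp_rw [mul_pow, mul_div_assoc, ← sum_mul, hω.sum_pow_pow_eq_ite]
        split_ifs <;> simp
    _ = p * ∑' m, z ^ (p * m) / (p * m)! := by
        rw [tsum_ite_dvd_eq_tsum_mul hp, tsum_mul_left]

theorem one_le_tsum_pow_mul_div_factorial {p : ℕ} (hp : p ≠ 0) (hpeven : Even p) (x : ℝ) :
    1 ≤ ∑' m, x ^ (p * m) / (p * m)! := by
  have hsum : Summable fun m => x ^ (p * m) / (p * m)! :=
    (Real.summable_pow_div_factorial x).comp_injective (mul_right_injective₀ hp)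
  have hnonneg (m : ℕ) : 0 ≤ x ^ (p * m) / (p * m)! :=
    div_nonneg ((hpeven.mul_right m).pow_nonneg x) (by positivity)
  simpa using hsum.le_tsum 0 fun m _ => hnonneg m

theorem f_lambda_abs_ge_on_real_general (p : ℕ) (hp : 3 ≤ p) (hpeven : Even p)
    (lam : ℝ)
    (f : ℂ → ℂ)
    (hf : ∀ z : ℂ, f z = lam * ∑ k ∈ Finset.range p,
      Complex.exp ((Complex.exp (2 * Real.pi * Complex.I / p)) ^ k * z))
    (x : ℝ) : p * |lam| ≤ ‖f x‖ := by
  have hp0 : p ≠ 0 := by omega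
  set S := ∑' m, x ^ (p * m) / (p * m)!
  have hS : ∑ k ∈ range p, exp (exp (2 * Real.pi * I / p) ^ k * x) = ((p * S : ℝ) : ℂ) := by
    rw [(isPrimitiveRoot_exp p hp0).sum_exp_mul_eq_tsum hp0, ofReal_mul, ofReal_tsum]
    push_cast
    rfl
  have h1S : 1 ≤ S := one_le_tsum_pow_mul_div_factorial hp0 hpeven x
  rw [hf, hS, ← ofReal_mul, norm_real, Real.norm_eq_abs, abs_mul, abs_mul, Nat.abs_cast,
    abs_of_nonneg (zero_le_one.trans h1S)]
  calc (p : ℝ) * |lam| = |lam| * (p * 1) := by ring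
    _ ≤ |lam| * (p * S) := by gcongr

theorem f_lambda_abs_ge_on_real (p : ℕ) (hp : 3 ≤ p) (hpeven : Even p)
    (lam : ℝ) (hlam : lam ≠ 0)
    (f : ℂ → ℂ)
    (hf : ∀ z : ℂ, f z = lam * ∑ k ∈ Finset.range p,
      Complex.exp ((Complex.exp (2 * Real.pi * Complex.I / p)) ^ k * z))
    (x : ℝ) : p * |lam| ≤ ‖f x‖ :=
  f_lambda_abs_ge_on_real_general p hp hpeven lam f hf x
end

section
/- Let p ≥ 3 be an integer and define g : (0,∞) → ℝ by g(x) = (p/x)(1 + x^p/p!). Then x* = (p·(p−2)!)^{1/p} is the unique global minimizer of g on (0,∞), the minimum value is g(x*) = (p/(p·(p−2)!)^{1/p})·(1 + 1/(p−1)), and this minimum value is strictly greater than 1. -/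
/-!
Rescale by `x*`, whose `p`-th power is `p (p-2)!`: writing `x = x* t` one gets
`g x = (p / x*) (t⁻¹ + t ^ (p-1) / (p-1))`. Multiplied by `(p-1) t`, the inequality
`t⁻¹ + t ^ (p-1) / (p-1) > 1 + 1 / (p-1)` for `t ≠ 1` is the strict Bernoulli inequality
`t ^ p > 1 + p (t - 1)`. Finally `x* < p` because `p (p-2)! < p ^ p`, so `g x* > p / x* > 1`.
-/

open Nat

lemma Nat.mul_factorial_sub_two_lt_pow_self {p : ℕ} (hp : 2 ≤ p) : p * (p - 2)! < p ^ p := by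
  obtain ⟨n, rfl⟩ := Nat.exists_eq_add_of_le' hp
  calc (n + 2) * (n + 2 - 2)! = (n + 2) * n ! := by rw [Nat.add_sub_cancel]
    _ ≤ (n + 2) * (n + 2) ^ n :=
        Nat.mul_le_mul_left _ (n.factorial_le_pow.trans (Nat.pow_le_pow_left (by omega) n))
    _ < (n + 2) * (n + 2) ^ (n + 1) :=
        Nat.mul_lt_mul_of_pos_left (Nat.pow_lt_pow_succ (by omega)) (by omega)
    _ = (n + 2) ^ (n + 2) := by ring

lemma one_add_one_div_lt_inv_add_pow_div {m : ℕ} (hm : 0 < m) {t : ℝ} (ht : 0 < t)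
    (ht1 : t ≠ 1) :
    1 + 1 / (m : ℝ) < t⁻¹ + t ^ m / m := by
  have hm' : (0 : ℝ) < m := by exact_mod_cast hm
  have bernoulli : 1 + (m + 1 : ℝ) * (t - 1) < t ^ (m + 1) := by
    have h := one_add_mul_self_lt_rpow_one_add (s := t - 1) (by linarith) (sub_ne_zero.2 ht1)
      (p := m + 1) (by linarith)
    rw [add_sub_cancel, ← Nat.cast_add_one, Real.rpow_natCast] at h
    exact_mod_cast h
  have key : t⁻¹ + t ^ m / m - (1 + 1 / m) =
      (t ^ (m + 1) - (1 + (m + 1) * (t - 1))) / (m * t) := by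
    field_simp
    ring
  rw [← sub_pos, key]
  exact div_pos (by linarith) (by positivity)

lemma div_mul_one_add_pow_div_factorial_eq {p : ℕ} (hp : 2 ≤ p) {c x : ℝ}
    (hc : c ^ p = p * (p - 2)!) (hc0 : c ≠ 0) (hx : x ≠ 0) :
    p / x * (1 + x ^ p / p !) = p / c * ((x / c)⁻¹ + (x / c) ^ (p - 1) / (p - 1 : ℕ)) := by
  obtain ⟨n, rfl⟩ := Nat.exists_eq_add_of_le' hp
  simp only [Nat.add_sub_cancel, Nat.add_succ_sub_one] at hc ⊢
  rw [Nat.factorial_succ, Nat.factorial_succ, div_pow, inv_div]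
  push_cast at hc ⊢
  field_simp
  rw [pow_succ c (n + 1)] at hc
  linear_combination x ^ (n + 2) * hc

theorem g_unique_min (p : ℕ) (hp : 3 ≤ p)
    (g : ℝ → ℝ)
    (hg : ∀ x : ℝ, 0 < x → g x = ((p : ℝ) / x) * (1 + x ^ p / (Nat.factorial p : ℝ)))
    (xstar : ℝ)
    (hxstar : xstar = ((p : ℝ) * (Nat.factorial (p - 2) : ℝ)) ^ ((1 : ℝ) / p)) :
    (0 < xstar) ∧
    (∀ x : ℝ, 0 < x → g xstar ≤ g x) ∧
    (∀ x : ℝ, 0 < x → x ≠ xstar → g xstar < g x) ∧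
    g xstar = ((p : ℝ) / ((p : ℝ) * (Nat.factorial (p - 2) : ℝ)) ^ ((1 : ℝ) / p)) *
      (1 + 1 / ((p : ℝ) - 1)) ∧
    1 < g xstar := by
  have hp2 : 2 ≤ p := by omega
  have hpos : 0 < xstar := hxstar ▸ by positivity
  have hpow : xstar ^ p = p * (p - 2)! := by
    rw [hxstar, one_div, Real.rpow_inv_natCast_pow (by positivity) (by omega)]
  have hg_scaled : ∀ x, 0 < x →
      g x = p / xstar * ((x / xstar)⁻¹ + (x / xstar) ^ (p - 1) / (p - 1 : ℕ)) := fun x hx =>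
    (hg x hx).trans (div_mul_one_add_pow_div_factorial_eq hp2 hpow hpos.ne' hx.ne')
  have hval : g xstar = p / xstar * (1 + 1 / (p - 1 : ℕ)) := by
    simp [hg_scaled xstar hpos, div_self hpos.ne']
  have hlt : ∀ x : ℝ, 0 < x → x ≠ xstar → g xstar < g x := by
    intro x hx hne
    rw [hval, hg_scaled x hx]
    refine mul_lt_mul_of_pos_left ?_ (by positivity)
    exact one_add_one_div_lt_inv_add_pow_div (by omega) (by positivity)
      (by rwa [Ne, div_eq_one_iff_eq hpos.ne'])
  have hxlt : xstar < p := lt_of_pow_lt_pow_left₀ p (by positivity) <| by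
    rw [hpow]
    exact_mod_cast Nat.mul_factorial_sub_two_lt_pow_self hp2
  refine ⟨hpos, fun x hx => ?_, hlt, ?_, ?_⟩
  · rcases eq_or_ne x xstar with rfl | hne
    exacts [le_rfl, (hlt x hx hne).le]
  · rw [hval, Nat.cast_sub (by omega), Nat.cast_one, ← hxstar]
  · rw [hval]
    exact one_lt_mul_of_lt_of_le ((one_lt_div hpos).2 hxlt) (le_add_of_nonneg_right (by positivity))
end

section
/- If p ≥ 3 is an even integer and λ ∈ ℝ with |λ| ≥ 1, then every real number escapes to infinity under iteration of f_λ: for every x ∈ ℝ, |f_λ^{∘n}(x)| → ∞ as n → ∞ (where f_λ^{∘n} denotes the n-th iterate of f_λ). In particular, ℝ is contained in the escaping set of f_λ. -/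
/-!
Writing `exp (ζ ^ k * z) = ∑ₙ (ζ ^ k * z) ^ n / n!` and summing over `k` filters the power series
through the roots of unity: `∑ₖ exp (ζ ^ k * z) = p * ∑ₘ z ^ (p * m) / (p * m)!`. For real `y` and
even `p` every term is nonnegative, so the sum is at least `p + p * |y| ^ p / p! ≥ |y| + 1`. Since
`|λ| ≥ 1`, `f_λ` maps `ℝ` to itself and raises `|y|` by at least one, so the `n`-th iterate of a real
point has modulus at least `n`.
-/

open Complex Finset Filter
open scoped Nat

theorem IsPrimitiveRoot.sum_pow_mul_eq_ite {K : Type*} [Field K] {ζ : K} {p : ℕ}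
    (hζ : IsPrimitiveRoot ζ p) (n : ℕ) :
    ∑ k ∈ range p, ζ ^ (k * n) = if p ∣ n then (p : K) else 0 := by
  simp only [mul_comm _ n, pow_mul]
  split_ifs with hdvd
  · simp [(hζ.pow_eq_one_iff_dvd n).mpr hdvd]
  · have hne : ζ ^ n ≠ 1 := fun h => hdvd ((hζ.pow_eq_one_iff_dvd n).mp h)
    rw [geom_sum_eq hne, ← pow_mul, mul_comm, pow_mul, hζ.pow_eq_one, one_pow, sub_self, zero_div]

theorem IsPrimitiveRoot.hasSum_sum_exp_pow_mul {ζ : ℂ} {p : ℕ} (hζ : IsPrimitiveRoot ζ p)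
    (z : ℂ) :
    HasSum (fun n => if p ∣ n then p * z ^ n / n ! else 0) (∑ k ∈ range p, exp (ζ ^ k * z)) := by
  have hexp : ∀ k ∈ range p, HasSum (fun n => (ζ ^ k * z) ^ n / n !) (exp (ζ ^ k * z)) :=
    fun k _ => by simpa [exp_eq_exp_ℂ] using NormedSpace.expSeries_div_hasSum_exp (ζ ^ k * z)
  convert hasSum_sum hexp using 2 with n
  simp only [mul_pow, ← pow_mul, mul_div_assoc, ← sum_mul, hζ.sum_pow_mul_eq_ite n]
  split_ifs <;> simp

theorem le_add_pow_succ_div_factorial (q : ℕ) {t : ℝ} (ht : 0 ≤ t) :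
    t ≤ q + t ^ (q + 1) / q ! := by
  rcases le_total t q with htq | hqt
  · have : 0 ≤ t ^ (q + 1) / q ! := by positivity
    linarith
  · have hfac : (q ! : ℝ) ≤ t ^ q :=
      calc (q ! : ℝ) ≤ (q : ℝ) ^ q := by exact_mod_cast Nat.factorial_le_pow q
        _ ≤ t ^ q := pow_le_pow_left₀ q.cast_nonneg hqt q
    have : t ≤ t ^ (q + 1) / q ! := by
      rw [le_div_iff₀ (by positivity), pow_succ']
      exact mul_le_mul_of_nonneg_left hfac ht
    linarith [q.cast_nonneg (α := ℝ)]

theorem IsPrimitiveRoot.exists_real_abs_add_one_le_sum_exp_pow_mul {ζ : ℂ} {p : ℕ}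
    (hζ : IsPrimitiveRoot ζ p) (hp : Even p) (hp0 : p ≠ 0) (y : ℝ) :
    ∃ T : ℝ, ∑ k ∈ range p, exp (ζ ^ k * y) = T ∧ |y| + 1 ≤ T := by
  set a : ℕ → ℝ := fun n => if p ∣ n then p * y ^ n / n ! else 0
  have hsum : HasSum (fun n => (a n : ℂ)) (∑ k ∈ range p, exp (ζ ^ k * y)) := by
    convert hζ.hasSum_sum_exp_pow_mul y using 2 with n
    simp only [a]
    split_ifs <;> push_cast <;> rfl
  have ha : HasSum a (∑' n, a n) :=
    (summable_ofReal.mp hsum.summable).hasSum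
  refine ⟨∑' n, a n, hsum.unique (hasSum_ofReal.mpr ha), ?_⟩
  have ha_nonneg : ∀ n, 0 ≤ a n := by
    intro n
    simp only [a]
    split_ifs with hdvd
    · have hn : Even n := even_iff_two_dvd.mpr (hp.two_dvd.trans hdvd)
      exact div_nonneg (mul_nonneg p.cast_nonneg (hn.pow_nonneg y)) (by positivity)
    · exact le_rfl
  have hpair := sum_le_hasSum {0, p} (fun n _ => ha_nonneg n) ha
  obtain ⟨q, rfl⟩ : ∃ q, p = q + 1 := ⟨p - 1, by omega⟩
  have ha0 : a 0 = q + 1 := by simp [a]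
  have haq : a (q + 1) = |y| ^ (q + 1) / q ! := by
    simp only [a, dvd_refl, if_true, hp.pow_abs, Nat.factorial_succ]
    push_cast
    field_simp
  rw [sum_pair (by omega), ha0, haq] at hpair
  linarith [le_add_pow_succ_div_factorial q (abs_nonneg y)]

theorem tendsto_norm_iterate_atTop_of_mapsTo {E : Type*} [Norm E] {f : E → E} {s : Set E}
    (hs : Set.MapsTo f s s) (hf : ∀ z ∈ s, ‖z‖ + 1 ≤ ‖f z‖) {x : E} (hx : x ∈ s) :
    Tendsto (fun n : ℕ => ‖f^[n] x‖) atTop atTop := by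
  have hgrowth : ∀ n : ℕ, ‖x‖ + n ≤ ‖f^[n] x‖ := by
    intro n
    induction n with
    | zero => simp
    | succ n ih =>
      rw [Function.iterate_succ_apply']
      have := hf _ (hs.iterate n hx)
      push_cast
      linarith
  exact tendsto_atTop_mono hgrowth
    (tendsto_atTop_add_const_left _ _ tendsto_natCast_atTop_atTop)

theorem real_line_escapes (p : ℕ) (hp : 3 ≤ p) (hpeven : Even p)
    (lam : ℝ) (hlam : 1 ≤ |lam|)
    (f : ℂ → ℂ)
    (hf : ∀ z : ℂ, f z = lam * ∑ k ∈ Finset.range p,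
      Complex.exp ((Complex.exp (2 * Real.pi * Complex.I / p)) ^ k * z))
    (x : ℝ) :
    Filter.Tendsto (fun n : ℕ => ‖f^[n] (x : ℂ)‖) Filter.atTop Filter.atTop := by
  have hζ := Complex.isPrimitiveRoot_exp p (by omega)
  have hstep : ∀ y : ℝ, ∃ y' : ℝ, f y = y' ∧ |y| + 1 ≤ |y'| := by
    intro y
    obtain ⟨T, hT, hyT⟩ := hζ.exists_real_abs_add_one_le_sum_exp_pow_mul hpeven (by omega) y
    refine ⟨lam * T, by rw [hf, hT]; push_cast; rfl, ?_⟩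
    rw [abs_mul, abs_of_nonneg (a := T) (by linarith [abs_nonneg y])]
    nlinarith [abs_nonneg y]
  refine tendsto_norm_iterate_atTop_of_mapsTo (s := Set.range ((↑) : ℝ → ℂ)) ?_ ?_ ⟨x, rfl⟩
  · rintro _ ⟨y, rfl⟩
    obtain ⟨y', hy', -⟩ := hstep y
    exact ⟨y', hy'.symm⟩
  · rintro _ ⟨y, rfl⟩
    obtain ⟨y', hy', hle⟩ := hstep y
    simpa [hy'] using hle
end

section
/- Let p ≥ 3 be an even integer and λ ∈ ℝ \ {0}. There exists r₀ > 0 such that for every z = x + iy ∈ ℂ with |x| ≥ r₀ and |y| ≤ π/(2p), one has |f_λ(z)| > |z|. -/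
/-!
Write `ω = exp (2πi/p)`, `c = cos (2π/p) < 1` and `t = |Re z|`. Since `p = 2m` is even,
`ω^m = -1`, so one of the terms `exp (ω^k z)` (with `k = 0` if `Re z ≥ 0`, `k = m` otherwise)
has modulus exactly `e^t`, while every other `ω^k` is a `p`-th root of unity `≠ 1`, whose real
part is at most `c`; on the strip `|Im z| ≤ 1` those terms are bounded by `e^(c t + 1)`. Hence
`|f z| ≥ |λ| (e^t - (p - 1) e^(c t + 1))`, which eventually exceeds `t + 1 ≥ |z|`.
-/

open Complex Finset

theorem Real.cos_le_cos_of_le_of_le_two_pi_sub {a θ : ℝ} (ha : 0 ≤ a) (haθ : a ≤ θ)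
    (hθ : θ ≤ 2 * Real.pi - a) : Real.cos θ ≤ Real.cos a := by
  rcases le_or_gt θ Real.pi with hθπ | hθπ
  · exact Real.cos_le_cos_of_nonneg_of_le_pi ha hθπ haθ
  · rw [← Real.cos_two_pi_sub θ]
    exact Real.cos_le_cos_of_nonneg_of_le_pi ha (by linarith) (by linarith)

theorem Real.cos_two_pi_div_lt_one {p : ℕ} (hp : 2 ≤ p) : Real.cos (2 * Real.pi / p) < 1 := by
  have hp' : (2 : ℝ) ≤ p := by exact_mod_cast hp
  rw [← Real.cos_zero]
  refine Real.cos_lt_cos_of_nonneg_of_le_pi le_rfl ?_ (by positivity)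
  rw [div_le_iff₀ (by positivity)]
  nlinarith [Real.pi_pos]

open Filter Asymptotics in
theorem Real.eventually_add_add_mul_exp_lt_mul_exp {c : ℝ} (hc : c < 1) (a b : ℝ) {L : ℝ}
    (hL : 0 < L) : ∀ᶠ t in atTop, t + a + b * Real.exp (c * t) < L * Real.exp t := by
  have hid : (fun t : ℝ => t) =o[atTop] Real.exp := by
    simpa using Real.isLittleO_pow_exp_atTop (n := 1)
  have hconst : (fun _ : ℝ => a) =o[atTop] Real.exp := by
    simpa using (Real.isLittleO_pow_exp_atTop (n := 0)).const_mul_left a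
  have hexp : (fun t => b * Real.exp (c * t)) =o[atTop] Real.exp := by
    refine (Real.isLittleO_exp_comp_exp_comp.2 ?_).const_mul_left b
    exact (tendsto_id.const_mul_atTop (sub_pos.2 hc)).congr fun t => by simp only [id]; ring
  filter_upwards [((hid.add hconst).add hexp).def (half_pos hL)] with t ht
  rw [Real.norm_eq_abs, Real.norm_of_nonneg (Real.exp_pos t).le] at ht
  linarith [(le_abs_self _).trans ht, mul_pos hL (Real.exp_pos t)]

theorem Complex.re_mul_le_of_norm_eq_one {ζ : ℂ} (hζ : ‖ζ‖ = 1) (z : ℂ) :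
    (ζ * z).re ≤ ζ.re * z.re + |z.im| := by
  have hζim : |ζ.im| ≤ 1 := hζ ▸ Complex.abs_im_le_norm ζ
  have : -(ζ.im * z.im) ≤ |z.im| := by
    calc -(ζ.im * z.im) ≤ |ζ.im| * |z.im| := by rw [← abs_mul]; exact neg_le_abs _
      _ ≤ |z.im| := mul_le_of_le_one_left (abs_nonneg _) hζim
  rw [Complex.mul_re]
  linarith

theorem Complex.norm_sum_exp_ge_of_re_le {ι : Type*} {s : Finset ι} {g : ι → ℂ} {i₀ : ι}
    (hi₀ : i₀ ∈ s) {b : ℝ} (hb : ∀ i ∈ s, i ≠ i₀ → (g i).re ≤ b) :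
    Real.exp (g i₀).re - (#s - 1 : ℝ) * Real.exp b ≤ ‖∑ i ∈ s, Complex.exp (g i)‖ := by
  classical
  have hrest : ‖∑ i ∈ s.erase i₀, Complex.exp (g i)‖ ≤ (#s - 1 : ℝ) * Real.exp b := by
    calc ‖∑ i ∈ s.erase i₀, Complex.exp (g i)‖
        ≤ ∑ i ∈ s.erase i₀, Real.exp b := by
          refine norm_sum_le_of_le _ fun i hi => ?_
          rw [Complex.norm_exp]
          exact Real.exp_le_exp.2 (hb i (mem_of_mem_erase hi) (ne_of_mem_erase hi))
      _ = (#s - 1 : ℝ) * Real.exp b := by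
          rw [sum_const, card_erase_of_mem hi₀, nsmul_eq_mul,
            Nat.cast_pred (card_pos.2 ⟨i₀, hi₀⟩)]
  have h := norm_sub_le (∑ i ∈ s, Complex.exp (g i)) (∑ i ∈ s.erase i₀, Complex.exp (g i))
  rw [← add_sum_erase s _ hi₀, add_sub_cancel_right, Complex.norm_exp] at h
  rw [← add_sum_erase s _ hi₀]
  linarith

section RootsOfUnity

variable {p : ℕ}

local notation "ω" => Complex.exp (2 * Real.pi * Complex.I / p)

theorem re_exp_two_pi_I_div_pow (k : ℕ) : (ω ^ k).re = Real.cos (2 * Real.pi * k / p) := by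
  rw [← Complex.exp_nat_mul, ← Complex.exp_ofReal_mul_I_re]
  congr 2
  push_cast
  ring

theorem re_exp_two_pi_I_div_pow_le (hp : 0 < p) {k : ℕ} (hk : k % p ≠ 0) :
    (ω ^ k).re ≤ Real.cos (2 * Real.pi / p) := by
  have hkp : k % p < p := Nat.mod_lt k hp
  have hp' : (0 : ℝ) < p := by exact_mod_cast hp
  have h1 : (1 : ℝ) ≤ (k % p : ℕ) := by exact_mod_cast Nat.one_le_iff_ne_zero.2 hk
  have h2 : ((k % p : ℕ) : ℝ) + 1 ≤ p := by exact_mod_cast hkp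
  rw [pow_eq_pow_mod k ((Complex.isPrimitiveRoot_exp p hp.ne').pow_eq_one),
    re_exp_two_pi_I_div_pow]
  apply Real.cos_le_cos_of_le_of_le_two_pi_sub (by positivity)
  · exact div_le_div_of_nonneg_right (by nlinarith [Real.pi_pos]) hp'.le
  · rw [div_le_iff₀ hp', sub_mul, div_mul_cancel₀ _ hp'.ne']
    nlinarith [Real.pi_pos]

theorem re_exp_two_pi_I_div_pow_mul_le (hp : 0 < p) {k : ℕ} (hk : k % p ≠ 0) {w : ℂ}
    (hw : 0 ≤ w.re) : (ω ^ k * w).re ≤ Real.cos (2 * Real.pi / p) * w.re + |w.im| := by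
  have hnorm : ‖ω ^ k‖ = 1 := by
    rw [norm_pow, (Complex.isPrimitiveRoot_exp p hp.ne').norm'_eq_one hp.ne', one_pow]
  calc (ω ^ k * w).re ≤ (ω ^ k).re * w.re + |w.im| :=
        Complex.re_mul_le_of_norm_eq_one hnorm w
    _ ≤ _ := by gcongr; exact re_exp_two_pi_I_div_pow_le hp hk

theorem exp_two_pi_I_div_pow_half_eq_neg_one {m : ℕ} (hm : p = m + m) (hm0 : m ≠ 0) :
    ω ^ m = -1 := by
  rw [← Complex.exp_nat_mul, hm, ← Complex.exp_pi_mul_I]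
  congr 1
  push_cast
  field_simp
  ring

theorem norm_sum_exp_exp_two_pi_I_div_pow_mul_ge (hp : Even p) (hp0 : 0 < p) (z : ℂ) :
    Real.exp |z.re| - (p - 1 : ℝ) * Real.exp (Real.cos (2 * Real.pi / p) * |z.re| + |z.im|) ≤
      ‖∑ k ∈ range p, Complex.exp (ω ^ k * z)‖ := by
  obtain ⟨m, hm⟩ := hp
  have hcard : (#(range p) : ℝ) = p := by rw [card_range]
  rw [← hcard]
  rcases le_or_gt 0 z.re with hx | hx
  · have h := Complex.norm_sum_exp_ge_of_re_le (g := fun k => ω ^ k * z) (mem_range.2 hp0)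
      (b := Real.cos (2 * Real.pi / p) * |z.re| + |z.im|) fun k hk hk0 => by
        rw [abs_of_nonneg hx]
        exact re_exp_two_pi_I_div_pow_mul_le hp0
          (by rwa [Nat.mod_eq_of_lt (mem_range.1 hk)]) hx
    simpa [abs_of_nonneg hx] using h
  · have hωm := exp_two_pi_I_div_pow_half_eq_neg_one hm (by omega)
    have h := Complex.norm_sum_exp_ge_of_re_le (g := fun k => ω ^ k * z)
      (mem_range.2 (show m < p by omega))
      (b := Real.cos (2 * Real.pi / p) * |z.re| + |z.im|) fun k hk hkm => by
        have hkp := mem_range.1 hk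
        have hmod : (k + m) % p ≠ 0 := by
          rcases lt_or_gt_of_ne hkm with h | h
          · rw [Nat.mod_eq_of_lt (by omega)]; omega
          · rw [Nat.mod_eq_sub_mod (by omega), Nat.mod_eq_of_lt (by omega)]; omega
        -- `ω^k z = ω^(k+m) (-z)`, and `Re (-z) > 0`
        have := re_exp_two_pi_I_div_pow_mul_le hp0 hmod (w := -z) (by simp; linarith)
        rw [pow_add, hωm] at this
        simpa [abs_of_neg hx] using this
    simpa [hωm, abs_of_neg hx] using h

end RootsOfUnity

theorem f_lambda_expanding_on_strip (p : ℕ) (hp : 3 ≤ p) (hpeven : Even p)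
    (lam : ℝ) (hlam : lam ≠ 0)
    (f : ℂ → ℂ)
    (hf : ∀ z : ℂ, f z = lam * ∑ k ∈ Finset.range p,
      Complex.exp ((Complex.exp (2 * Real.pi * Complex.I / p)) ^ k * z)) :
    ∃ r₀ > (0 : ℝ), ∀ z : ℂ, r₀ ≤ |z.re| → |z.im| ≤ Real.pi / (2 * p) →
      ‖z‖ < ‖f z‖ := by
  set c := Real.cos (2 * Real.pi / p)
  obtain ⟨r, hr⟩ := Filter.eventually_atTop.1 <| Real.eventually_add_add_mul_exp_lt_mul_exp
    (Real.cos_two_pi_div_lt_one (by omega : 2 ≤ p)) 1 (|lam| * (p - 1) * Real.exp 1)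
    (abs_pos.2 hlam)
  refine ⟨max r 1, by positivity, fun z hzre hzim => ?_⟩
  set t := |z.re|
  have hp' : (3 : ℝ) ≤ p := by exact_mod_cast hp
  have him : |z.im| ≤ 1 :=
    hzim.trans <| (div_le_one (by positivity)).2 (by nlinarith [Real.pi_le_four])
  have hexp : Real.exp (c * t + |z.im|) ≤ Real.exp 1 * Real.exp (c * t) := by
    rw [← Real.exp_add]; exact Real.exp_le_exp.2 (by linarith)
  have hsum := norm_sum_exp_exp_two_pi_I_div_pow_mul_ge hpeven (by omega) z
  have hgrowth := hr t (le_of_max_le_left hzre)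
  rw [hf, norm_mul, Complex.norm_real, Real.norm_eq_abs]
  calc ‖z‖ ≤ t + 1 := (Complex.norm_le_abs_re_add_abs_im z).trans (by linarith)
    _ < |lam| * (Real.exp t - (p - 1) * (Real.exp 1 * Real.exp (c * t))) := by linarith
    _ ≤ |lam| * (Real.exp t - (p - 1) * Real.exp (c * t + |z.im|)) := by gcongr; linarith
    _ ≤ _ := by gcongr
end

section
/- Let p ≥ 3 be an integer and λ ∈ ℝ \ {0}. For every ε > 0 there exists R > 0 such that for all z ∈ ℂ with Re z ≥ R and |Im z| ≤ π/(2p), one has |f_λ(z) − λ e^z| < ε·|λ e^z|; that is, f_λ(z) = λ e^z (1 + o(1)) as Re z → ∞ within the horizontal strip |Im z| ≤ π/(2p). -/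
/-! For `0 < k < p` the exponent of the `k`-th term satisfies
`Re (ω ^ k * z) ≤ cos (2π/p) * Re z + |Im z|`, and `cos (2π/p) < 1`; so in a horizontal strip each
such term is `O(exp ((cos (2π/p) - 1) * Re z))` relative to `exp z`, while the `k = 0` term is
`exp z` itself. -/

open Complex Finset Filter Topology
open scoped Real

lemma Real.cos_two_pi_div_lt_one_s15 {n : ℕ} (hn : 2 ≤ n) : cos (2 * π / n) < 1 := by
  have hn' : (2 : ℝ) ≤ n := by exact_mod_cast hn
  rw [← Real.cos_zero]
  apply Real.cos_lt_cos_of_nonneg_of_le_pi le_rfl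
  · rw [div_le_iff₀ (by linarith)]; nlinarith [pi_pos]
  · positivity

lemma Real.cos_two_pi_mul_div_le {n k : ℕ} (hk : 0 < k) (hkn : k < n) :
    cos (2 * π * k / n) ≤ cos (2 * π / n) := by
  have hn : (0 : ℝ) < n := by exact_mod_cast hk.trans hkn
  have hk' : (1 : ℝ) ≤ k := by exact_mod_cast hk
  have hkn' : (k : ℝ) + 1 ≤ n := by exact_mod_cast hkn
  have hlow : 2 * π / n ≤ 2 * π * k / n := by
    apply div_le_div_of_nonneg_right _ hn.le
    exact le_mul_of_one_le_right (by positivity) hk'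
  have hhigh : 2 * π / n ≤ 2 * π - 2 * π * k / n := by
    rw [le_sub_iff_add_le, ← add_div, div_le_iff₀ hn]; nlinarith [pi_pos]
  rcases le_total (2 * π * k / n) π with h | h
  · exact cos_le_cos_of_nonneg_of_le_pi (by positivity) h hlow
  · rw [← cos_two_pi_sub]
    exact cos_le_cos_of_nonneg_of_le_pi (by positivity) (by linarith) hhigh

lemma Complex.re_exp_ofReal_mul_I_mul_le (t : ℝ) (z : ℂ) :
    (exp (t * I) * z).re ≤ Real.cos t * z.re + |z.im| := by
  rw [mul_re, exp_ofReal_mul_I_re, exp_ofReal_mul_I_im]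
  have hsin : -(Real.sin t * z.im) ≤ |z.im| :=
    calc -(Real.sin t * z.im) ≤ |Real.sin t| * |z.im| := (neg_le_abs _).trans_eq (abs_mul _ _)
      _ ≤ |z.im| := mul_le_of_le_one_left (abs_nonneg _) (Real.abs_sin_le_one t)
  linarith

lemma Complex.norm_exp_pow_mul_le {n k : ℕ} (hk : 0 < k) (hkn : k < n) {z : ℂ} (hz : 0 ≤ z.re) :
    ‖exp (exp (2 * π * I / n) ^ k * z)‖ ≤ Real.exp (Real.cos (2 * π / n) * z.re + |z.im|) := by
  have hpow : exp (2 * π * I / n) ^ k = exp ((2 * π * k / n : ℝ) * I) := by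
    rw [← exp_nat_mul]; push_cast; ring_nf
  rw [norm_exp, hpow, Real.exp_le_exp]
  calc (exp ((2 * π * k / n : ℝ) * I) * z).re ≤ Real.cos (2 * π * k / n) * z.re + |z.im| :=
        re_exp_ofReal_mul_I_mul_le _ z
    _ ≤ Real.cos (2 * π / n) * z.re + |z.im| := by
      gcongr; exact Real.cos_two_pi_mul_div_le hk hkn

theorem Complex.exists_norm_sum_exp_root_pow_mul_sub_exp_lt {n : ℕ} (hn : 2 ≤ n) (B : ℝ) {ε : ℝ}
    (hε : 0 < ε) :
    ∃ R > 0, ∀ z : ℂ, R ≤ z.re → |z.im| ≤ B →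
      ‖∑ k ∈ range n, exp (exp (2 * π * I / n) ^ k * z) - exp z‖ < ε * ‖exp z‖ := by
  set c := 1 - Real.cos (2 * π / n) with hc_def
  have hc : 0 < c := sub_pos.2 (Real.cos_two_pi_div_lt_one_s15 hn)
  have hdecay : Tendsto (fun x => n * Real.exp (B - c * x)) atTop (𝓝 0) := by
    have := tendsto_atBot_add_const_left atTop B
      (tendsto_neg_atTop_atBot.comp (tendsto_id.const_mul_atTop hc))
    simpa [sub_eq_add_neg] using (Real.tendsto_exp_atBot.comp this).const_mul (n : ℝ)
  obtain ⟨R, hR⟩ :=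
    eventually_atTop.1 ((hdecay.eventually_lt_const hε).and (eventually_gt_atTop 0))
  refine ⟨R, (hR R le_rfl).2, fun z hre him => ?_⟩
  have hx : 0 ≤ z.re := (hR R le_rfl).2.le.trans hre
  have hhead : ∑ k ∈ range n, exp (exp (2 * π * I / n) ^ k * z) - exp z
      = ∑ k ∈ Ico 1 n, exp (exp (2 * π * I / n) ^ k * z) := by
    rw [range_eq_Ico, sum_eq_sum_Ico_succ_bot (by omega), pow_zero, one_mul, add_sub_cancel_left]
  calc _ = ‖∑ k ∈ Ico 1 n, exp (exp (2 * π * I / n) ^ k * z)‖ := by rw [hhead]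
    _ ≤ ∑ k ∈ Ico 1 n, Real.exp (Real.cos (2 * π / n) * z.re + |z.im|) :=
      norm_sum_le_of_le _ fun k hk =>
        norm_exp_pow_mul_le (mem_Ico.1 hk).1 (mem_Ico.1 hk).2 hx
    _ ≤ n * Real.exp (B - c * z.re) * Real.exp z.re := by
      rw [sum_const, Nat.card_Ico, nsmul_eq_mul, mul_assoc, ← Real.exp_add]
      refine mul_le_mul (by exact_mod_cast Nat.sub_le n 1) (Real.exp_le_exp.2 ?_)
        (Real.exp_pos _).le n.cast_nonneg
      linarith
    _ < ε * ‖exp z‖ := by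
      rw [norm_exp]
      gcongr
      exact (hR _ hre).1

theorem f_lambda_asymptotic_exp (p : ℕ) (hp : 3 ≤ p) (lam : ℝ) (hlam : lam ≠ 0)
    (f : ℂ → ℂ)
    (hf : ∀ z : ℂ, f z = lam * ∑ k ∈ Finset.range p,
      Complex.exp ((Complex.exp (2 * Real.pi * Complex.I / p)) ^ k * z))
    (ε : ℝ) (hε : 0 < ε) :
    ∃ R > (0 : ℝ), ∀ z : ℂ, R ≤ z.re → |z.im| ≤ Real.pi / (2 * p) →
      ‖f z - lam * Complex.exp z‖ < ε * ‖(lam : ℂ) * Complex.exp z‖ := by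
  obtain ⟨R, hR, hasymp⟩ :=
    exists_norm_sum_exp_root_pow_mul_sub_exp_lt (by omega : 2 ≤ p) (Real.pi / (2 * p)) hε
  refine ⟨R, hR, fun z hre him => ?_⟩
  have hlam' : 0 < ‖(lam : ℂ)‖ := norm_pos_iff.2 (Complex.ofReal_ne_zero.2 hlam)
  rw [hf, ← mul_sub, norm_mul, norm_mul, mul_left_comm]
  exact mul_lt_mul_of_pos_left (hasymp z hre him) hlam'
end
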